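/- arXiv:0808.1291 — 4 statements merged into one kernel-verified Lean document; each statement's English description precedes it below -/
import Mathlib

section
/- For each non-negative integer M, the coefficient α_M evaluated at s = 2M+1 satisfies α_M(2M+1) = π^(2M) · (1/2)_M / M!, where (1/2)_M = (1/2)(3/2)···(M-1/2) is the Pochhammer symbol. -/
/-- `sinc z = sin (π z)/(π z)` (`= 1` at `z = 0`). -/
noncomputable def sinc (z : ℂ) : ℂ :=
  if z = 0 then 1 else Complex.sin (Real.pi * z) / (Real.pi * z)

/-!
Put `s = 2M + 1`. Since `exp g = sinc`, we have `exp (-s g(z)) sin (πz) ^ s = (πz) ^ s`, so in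
`ℂ⟦X⟧` the Taylor series of `exp (-s g)` is `π ^ s T⁻¹ ^ s`, where `T` is the series of
`sin (πz) / z`. Thus `α_M(2M+1) = π ^ (2M+1) [z ^ 2M] T⁻¹ ^ (2M+1)`, which is `π ^ (2M+1)` times the
residue of `sin (πz) ^ -(2M+1)` at `0`. Differentiating `π cos (πz) / sin (πz) ^ (n+2)` and using
`cos² = 1 - sin²` gives `π² ((n+1) / sin (πz) ^ (n+1) - (n+2) / sin (πz) ^ (n+3))`; a derivative
has no residue, so `res sin ^ -(n+3) = (n+1)/(n+2) · res sin ^ -(n+1)`, and from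
`res (1 / sin (πz)) = 1/π` we get `(1/2)_M / (M! π)`.
-/

open PowerSeries Filter
open scoped ContDiff Nat Topology Real

section TaylorSeries

variable {𝕜 : Type*} [NontriviallyNormedField 𝕜]

noncomputable def taylorSeries (f : 𝕜 → 𝕜) (x : 𝕜) : 𝕜⟦X⟧ :=
  PowerSeries.mk fun n => iteratedDeriv n f x / n !

@[simp]
theorem coeff_taylorSeries (f : 𝕜 → 𝕜) (x : 𝕜) (n : ℕ) :
    coeff n (taylorSeries f x) = iteratedDeriv n f x / n ! :=
  coeff_mk _ _

theorem taylorSeries_congr {f g : 𝕜 → 𝕜} {x : 𝕜} (h : f =ᶠ[𝓝 x] g) :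
    taylorSeries f x = taylorSeries g x := by
  ext n
  simp only [coeff_taylorSeries, h.iteratedDeriv_eq]

theorem taylorSeries_const (c x : 𝕜) : taylorSeries (fun _ => c) x = C c := by
  ext n
  cases n <;> simp [iteratedDeriv_const, coeff_C]

theorem taylorSeries_smul (c : 𝕜) (f : 𝕜 → 𝕜) (x : 𝕜) :
    taylorSeries (c • f) x = c • taylorSeries f x := by
  ext n
  simp [iteratedDeriv_const_smul_field, mul_div_assoc]

theorem taylorSeries_add {f g : 𝕜 → 𝕜} {x : 𝕜} (hf : ContDiffAt 𝕜 ∞ f x)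
    (hg : ContDiffAt 𝕜 ∞ g x) :
    taylorSeries (f + g) x = taylorSeries f x + taylorSeries g x := by
  ext n
  simp [iteratedDeriv_add (hf.of_le (by exact_mod_cast le_top))
    (hg.of_le (by exact_mod_cast le_top)), add_div]

variable [CharZero 𝕜]

theorem derivative_taylorSeries (f : 𝕜 → 𝕜) (x : 𝕜) :
    d⁄dX 𝕜 (taylorSeries f x) = taylorSeries (deriv f) x := by
  ext n
  rw [coeff_derivative, coeff_taylorSeries, coeff_taylorSeries, iteratedDeriv_succ',
    Nat.factorial_succ]
  push_cast
  field_simp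

theorem taylorSeries_mul {f g : 𝕜 → 𝕜} {x : 𝕜} (hf : ContDiffAt 𝕜 ∞ f x)
    (hg : ContDiffAt 𝕜 ∞ g x) :
    taylorSeries (f * g) x = taylorSeries f x * taylorSeries g x := by
  ext n
  rw [coeff_mul, Finset.Nat.sum_antidiagonal_eq_sum_range_succ_mk, coeff_taylorSeries,
    iteratedDeriv_mul (hf.of_le (by exact_mod_cast le_top)) (hg.of_le (by exact_mod_cast le_top)),
    Finset.sum_div]
  refine Finset.sum_congr rfl fun i hi => ?_
  simp only [coeff_taylorSeries]
  rw [Nat.cast_choose 𝕜 (Finset.mem_range_succ_iff.mp hi)]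
  field_simp [Nat.factorial_ne_zero]

theorem taylorSeries_pow {f : 𝕜 → 𝕜} {x : 𝕜} (hf : ContDiffAt 𝕜 ∞ f x) (k : ℕ) :
    taylorSeries (f ^ k) x = taylorSeries f x ^ k := by
  induction k with
  | zero => rw [pow_zero, pow_zero]; exact taylorSeries_const 1 x
  | succ k ih => rw [pow_succ, taylorSeries_mul (f := f ^ k) (hf.pow k) hf, ih, pow_succ]

theorem taylorSeries_id (x : 𝕜) : taylorSeries id x = C x + X := by
  refine derivative.ext ?_ ?_
  · rw [derivative_taylorSeries, deriv_id', taylorSeries_const]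
    simp
  · rw [← coeff_zero_eq_constantCoeff_apply, ← coeff_zero_eq_constantCoeff_apply]
    simp

theorem HasFPowerSeriesAt.taylorSeries_eq [CompleteSpace 𝕜] {f : 𝕜 → 𝕜} {x : 𝕜} {a : ℕ → 𝕜}
    (h : HasFPowerSeriesAt f (FormalMultilinearSeries.ofScalars 𝕜 a) x) :
    taylorSeries f x = PowerSeries.mk a := by
  have ha := FormalMultilinearSeries.ofScalars_series_injective 𝕜 𝕜
    (h.analyticAt.hasFPowerSeriesAt.eq_formalMultilinearSeries h)
  ext n
  simp [← ha]

end TaylorSeries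

theorem hasFPowerSeriesAt_ofScalars_of_hasSum {𝕜 : Type*} [NontriviallyNormedField 𝕜]
    {f : 𝕜 → 𝕜} {a : ℕ → 𝕜} {r : ℝ} (hr : 0 < r)
    (h : ∀ z ∈ Metric.ball (0 : 𝕜) r, HasSum (fun n => a n * z ^ n) (f z)) :
    HasFPowerSeriesAt f (FormalMultilinearSeries.ofScalars 𝕜 a) 0 := by
  obtain ⟨w, hw0, hwr⟩ := NormedField.exists_norm_lt 𝕜 hr
  have hw : w ∈ Metric.ball (0 : 𝕜) r := by simpa using hwr
  refine ⟨‖w‖₊, ?_, by simpa using hw0, ?_⟩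
  · refine FormalMultilinearSeries.le_radius_of_tendsto _ (l := 0) ?_
    simpa [FormalMultilinearSeries.ofScalars_norm] using
      (h w hw).summable.tendsto_atTop_zero.norm
  · intro y hy
    have hy : y ∈ Metric.ball (0 : 𝕜) r := by
      have hyw : ‖y‖ < ‖w‖ := by simpa using hy
      simpa using hyw.trans hwr
    simpa [FormalMultilinearSeries.ofScalars_apply_eq, mul_comm] using h y hy

theorem PowerSeries.hasSum_coeff_expand_mul_pow_iff {R : Type*} [CommRing R] [TopologicalSpace R]
    (p : ℕ) (hp : p ≠ 0) (f : R⟦X⟧) (z s : R) :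
    HasSum (fun m => coeff m (expand p hp f) * z ^ m) s ↔
      HasSum (fun n => coeff n f * z ^ (p * n)) s := by
  rw [← (mul_right_injective₀ hp).hasSum_iff]
  · simp [Function.comp_def]
  · intro m hm
    rw [coeff_expand_of_not_dvd p hp f fun ⟨k, hk⟩ => hm ⟨k, hk.symm⟩, zero_mul]

theorem PowerSeries.coeff_X_mul_derivative {R : Type*} [CommSemiring R] (f : R⟦X⟧) (n : ℕ) :
    coeff n (X * d⁄dX R f) = n * coeff n f := by
  cases n with
  | zero => simp
  | succ n => rw [coeff_succ_X_mul, coeff_derivative, mul_comm]; push_cast; ring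

noncomputable def sinPiSeries : ℂ⟦X⟧ := taylorSeries (fun z => Complex.sin (π * z)) 0

noncomputable def cosPiSeries : ℂ⟦X⟧ := taylorSeries (fun z => Complex.cos (π * z)) 0

theorem contDiffAt_sin_pi_mul (z : ℂ) : ContDiffAt ℂ ∞ (fun z => Complex.sin (π * z)) z := by
  fun_prop

theorem contDiffAt_cos_pi_mul (z : ℂ) : ContDiffAt ℂ ∞ (fun z => Complex.cos (π * z)) z := by
  fun_prop

theorem derivative_sinPiSeries : d⁄dX ℂ sinPiSeries = C (π : ℂ) * cosPiSeries := by
  have hderiv : deriv (fun z => Complex.sin (π * z)) = (π : ℂ) • fun z => Complex.cos (π * z) := by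
    ext z
    simp [mul_comm]
  rw [sinPiSeries, derivative_taylorSeries, hderiv, taylorSeries_smul, smul_eq_C_mul, cosPiSeries]

theorem derivative_cosPiSeries : d⁄dX ℂ cosPiSeries = -(C (π : ℂ) * sinPiSeries) := by
  have hderiv : deriv (fun z => Complex.cos (π * z)) = (-π : ℂ) • fun z => Complex.sin (π * z) := by
    ext z
    simp [mul_comm]
  rw [cosPiSeries, derivative_taylorSeries, hderiv, taylorSeries_smul, smul_eq_C_mul, sinPiSeries,
    map_neg, neg_mul]

theorem sinPiSeries_sq_add_cosPiSeries_sq : sinPiSeries ^ 2 + cosPiSeries ^ 2 = 1 := by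
  have hpyth : (fun z => Complex.sin (π * z)) ^ 2 + (fun z => Complex.cos (π * z)) ^ 2 =
      fun _ => 1 := by
    ext z
    simp [Complex.sin_sq_add_cos_sq]
  rw [sinPiSeries, cosPiSeries, ← taylorSeries_pow (contDiffAt_sin_pi_mul 0),
    ← taylorSeries_pow (contDiffAt_cos_pi_mul 0),
    ← taylorSeries_add (f := (fun z => Complex.sin (π * z)) ^ 2)
      (g := (fun z => Complex.cos (π * z)) ^ 2) ((contDiffAt_sin_pi_mul 0).pow 2)
      ((contDiffAt_cos_pi_mul 0).pow 2), hpyth, taylorSeries_const, map_one]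

theorem constantCoeff_sinPiSeries : constantCoeff sinPiSeries = 0 := by
  simp [sinPiSeries, ← coeff_zero_eq_constantCoeff_apply]

theorem constantCoeff_cosPiSeries : constantCoeff cosPiSeries = 1 := by
  simp [cosPiSeries, ← coeff_zero_eq_constantCoeff_apply]

noncomputable def sinPiDivXSeries : ℂ⟦X⟧ := PowerSeries.mk fun n => coeff (n + 1) sinPiSeries

theorem X_mul_sinPiDivXSeries : X * sinPiDivXSeries = sinPiSeries := by
  ext n
  cases n with
  | zero => simp [constantCoeff_sinPiSeries]
  | succ n => simp [sinPiDivXSeries, coeff_succ_X_mul]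

theorem constantCoeff_sinPiDivXSeries : constantCoeff sinPiDivXSeries = π := by
  have h := congrArg (coeff 0) derivative_sinPiSeries
  rw [coeff_derivative, coeff_C_mul, coeff_zero_eq_constantCoeff_apply,
    constantCoeff_cosPiSeries] at h
  simpa [sinPiDivXSeries, ← coeff_zero_eq_constantCoeff_apply] using h

theorem sinPiDivXSeries_add_X_mul_derivative :
    sinPiDivXSeries + X * d⁄dX ℂ sinPiDivXSeries = C (π : ℂ) * cosPiSeries := by
  rw [← derivative_sinPiSeries, ← X_mul_sinPiDivXSeries, Derivation.leibniz, derivative_X,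
    smul_eq_mul, smul_eq_mul, mul_one, add_comm]

/-- With `W = z ^ (n+2) π cos (πz) / sin (πz) ^ (n+2)`, the left side is
`z ^ (n+3) (d/dz) (π cos (πz) / sin (πz) ^ (n+2))`. -/
theorem X_mul_derivative_cosPiSeries_mul_inv_pow (n : ℕ) :
    X * d⁄dX ℂ (C (π : ℂ) * cosPiSeries * sinPiDivXSeries⁻¹ ^ (n + 2))
        - (n + 2 : ℂ⟦X⟧) * (C (π : ℂ) * cosPiSeries * sinPiDivXSeries⁻¹ ^ (n + 2))
      = C (π : ℂ) ^ 2 * ((n + 1 : ℂ⟦X⟧) * X ^ 2 * sinPiDivXSeries⁻¹ ^ (n + 1)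
        - (n + 2 : ℂ⟦X⟧) * sinPiDivXSeries⁻¹ ^ (n + 3)) := by
  set T := sinPiDivXSeries
  set U := T⁻¹
  have hUT : U * T = 1 :=
    PowerSeries.inv_mul_cancel T (by simp [T, constantCoeff_sinPiDivXSeries])
  have hdU : d⁄dX ℂ (U ^ (n + 2)) = (n + 2) * U ^ (n + 1) * (-U ^ 2 * d⁄dX ℂ T) := by
    rw [Derivation.leibniz_pow, PowerSeries.derivative_inv', smul_eq_mul, nsmul_eq_mul]
    push_cast
    ring
  rw [Derivation.leibniz, Derivation.leibniz, hdU, derivative_cosPiSeries, derivative_C]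
  simp only [smul_eq_mul, mul_zero, add_zero]
  linear_combination
    -(n + 2) * C (π : ℂ) * cosPiSeries * U ^ (n + 3) * sinPiDivXSeries_add_X_mul_derivative
    + (n + 2) * C (π : ℂ) * cosPiSeries * U ^ (n + 2) * hUT
    - (n + 2) * C (π : ℂ) ^ 2 * U ^ (n + 3) * sinPiSeries_sq_add_cosPiSeries_sq
    + C (π : ℂ) ^ 2 * X * U ^ (n + 2) * X_mul_sinPiDivXSeries
    - (n + 2) * C (π : ℂ) ^ 2 * U ^ (n + 3) * (X * T + sinPiSeries) * X_mul_sinPiDivXSeries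
    - C (π : ℂ) ^ 2 * X ^ 2 * U ^ (n + 1) * hUT
    + (n + 2) * C (π : ℂ) ^ 2 * X ^ 2 * U ^ (n + 1) * (U * T + 1) * hUT

theorem coeff_inv_sinPiDivXSeries_pow_recurrence (n : ℕ) :
    (n + 2 : ℂ) * coeff (n + 2) (sinPiDivXSeries⁻¹ ^ (n + 3))
      = (n + 1) * coeff n (sinPiDivXSeries⁻¹ ^ (n + 1)) := by
  have h := X_mul_derivative_cosPiSeries_mul_inv_pow n
  set W := C (π : ℂ) * cosPiSeries * sinPiDivXSeries⁻¹ ^ (n + 2)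
  have h1 : (n + 1 : ℂ⟦X⟧) = C (n + 1 : ℂ) := by rw [map_add, map_natCast, map_one]
  have h2 : (n + 2 : ℂ⟦X⟧) = C (n + 2 : ℂ) := by rw [map_add, map_natCast, map_ofNat]
  rw [h1, h2, ← map_pow] at h
  -- on the left the coefficient of `z ^ (n+2)` vanishes: a derivative has no residue
  replace h := congrArg (coeff (n + 2)) h
  simp only [map_sub, coeff_X_mul_derivative, coeff_C_mul, mul_assoc, coeff_X_pow_mul',
    if_pos (show 2 ≤ n + 2 by omega), Nat.add_sub_cancel] at h
  have hπ : (π : ℂ) ≠ 0 := by exact_mod_cast Real.pi_ne_zero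
  push_cast at h
  rw [sub_self, eq_comm, mul_eq_zero] at h
  linear_combination -h.resolve_left (pow_ne_zero 2 hπ)

theorem coeff_inv_sinPiDivXSeries_pow (M : ℕ) :
    coeff (2 * M) (sinPiDivXSeries⁻¹ ^ (2 * M + 1))
      = (∏ i ∈ Finset.range M, ((1 : ℂ) / 2 + i)) / (M ! * π) := by
  induction M with
  | zero =>
    simp [coeff_zero_eq_constantCoeff_apply, constantCoeff_inv, constantCoeff_sinPiDivXSeries]
  | succ M ih =>
    have h := coeff_inv_sinPiDivXSeries_pow_recurrence (2 * M)
    rw [ih] at h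
    rw [show 2 * (M + 1) = 2 * M + 2 by ring, show 2 * M + 2 + 1 = 2 * M + 3 by ring,
      Finset.prod_range_succ, Nat.factorial_succ]
    have hπ : (π : ℂ) ≠ 0 := by exact_mod_cast Real.pi_ne_zero
    push_cast at h ⊢
    field_simp at h ⊢
    linear_combination h

theorem taylorSeries_eq_of_mul_sin_pi_mul_pow {F : ℂ → ℂ} (hF : ContDiffAt ℂ ∞ F 0) (k : ℕ)
    (h : ∀ᶠ z in 𝓝 0, F z * Complex.sin (π * z) ^ k = (π * z) ^ k) :
    taylorSeries F 0 = C ((π : ℂ) ^ k) * sinPiDivXSeries⁻¹ ^ k := by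
  have hUT : sinPiDivXSeries⁻¹ * sinPiDivXSeries = 1 :=
    PowerSeries.inv_mul_cancel _ (by simp [constantCoeff_sinPiDivXSeries])
  have hlin : taylorSeries (fun z => (π : ℂ) * z) 0 = C (π : ℂ) * X := by
    rw [show (fun z => (π : ℂ) * z) = (π : ℂ) • id from rfl, taylorSeries_smul, taylorSeries_id,
      map_zero, zero_add, smul_eq_C_mul]
  have hprod : taylorSeries F 0 * sinPiSeries ^ k = (C (π : ℂ) * X) ^ k := by
    rw [sinPiSeries, ← taylorSeries_pow (contDiffAt_sin_pi_mul 0), ← hlin,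
      ← taylorSeries_pow (by fun_prop),
      ← taylorSeries_mul (g := (fun z => Complex.sin (π * z)) ^ k) hF
        ((contDiffAt_sin_pi_mul 0).pow k)]
    exact taylorSeries_congr h
  have hcancel : taylorSeries F 0 * sinPiDivXSeries ^ k = C ((π : ℂ) ^ k) := by
    refine mul_right_cancel₀ (pow_ne_zero k X_ne_zero) ?_
    rw [mul_assoc, ← mul_pow, mul_comm _ X, X_mul_sinPiDivXSeries, hprod, mul_pow, map_pow]
  calc taylorSeries F 0
      = taylorSeries F 0 * sinPiDivXSeries ^ k * sinPiDivXSeries⁻¹ ^ k := by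
        rw [mul_assoc, ← mul_pow, mul_comm sinPiDivXSeries, hUT, one_pow, mul_one]
    _ = C ((π : ℂ) ^ k) * sinPiDivXSeries⁻¹ ^ k := by rw [hcancel]

theorem sin_pi_mul_eq_sinc_mul (z : ℂ) : Complex.sin (π * z) = sinc z * (π * z) := by
  unfold sinc
  split_ifs with hz
  · simp [hz]
  · rw [div_mul_cancel₀]
    simp [hz, Real.pi_ne_zero]

theorem exp_neg_mul_mul_sin_pi_mul_pow {g : ℂ → ℂ} {z : ℂ} (hgz : Complex.exp (g z) = sinc z)
    (k : ℕ) : Complex.exp (-k * g z) * Complex.sin (π * z) ^ k = (π * z) ^ k := by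
  rw [sin_pi_mul_eq_sinc_mul, mul_pow, ← hgz, ← Complex.exp_nat_mul, ← mul_assoc,
    ← Complex.exp_add, neg_mul, neg_add_cancel, Complex.exp_zero, one_mul]

theorem sinc_coeff_at_odd_general
    (g : ℂ → ℂ)
    (hge : ∀ z ∈ Metric.ball (0 : ℂ) 1, Complex.exp (g z) = sinc z)
    (α : ℕ → ℂ → ℂ)
    (hα : ∀ s : ℂ, ∀ z ∈ Metric.ball (0 : ℂ) 1,
      HasSum (fun n => α n s * z ^ (2 * n)) (Complex.exp (-s * g z)))
    (M : ℕ) :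
    α M (2 * M + 1)
      = (Real.pi : ℂ) ^ (2 * M) * (∏ i ∈ Finset.range M, ((1 : ℂ) / 2 + i))
          / (Nat.factorial M) := by
  have hs : (2 * M + 1 : ℂ) = ((2 * M + 1 : ℕ) : ℂ) := by push_cast; rfl
  rw [hs]
  set F : ℂ → ℂ := fun z => Complex.exp (-((2 * M + 1 : ℕ) : ℂ) * g z)
  set A := expand 2 two_ne_zero (PowerSeries.mk fun n => α n ((2 * M + 1 : ℕ) : ℂ))
  have hA : HasFPowerSeriesAt F (FormalMultilinearSeries.ofScalars ℂ fun m => coeff m A) 0 :=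
    hasFPowerSeriesAt_ofScalars_of_hasSum one_pos fun z hz =>
      (hasSum_coeff_expand_mul_pow_iff 2 two_ne_zero _ z _).mpr
        (by simpa only [coeff_mk] using hα _ z hz)
  have hTaylor := taylorSeries_eq_of_mul_sin_pi_mul_pow hA.analyticAt.contDiffAt (2 * M + 1) <|
    Filter.mem_of_superset (Metric.ball_mem_nhds 0 one_pos) fun z hz =>
      exp_neg_mul_mul_sin_pi_mul_pow (hge z hz) _
  have hαA : α M ((2 * M + 1 : ℕ) : ℂ) = coeff (2 * M) (taylorSeries F 0) := by
    rw [hA.taylorSeries_eq]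
    simp [A]
  rw [hαA, hTaylor, coeff_C_mul, coeff_inv_sinPiDivXSeries_pow]
  have hπ : (π : ℂ) ≠ 0 := by exact_mod_cast Real.pi_ne_zero
  field_simp
  ring

/-- `α M (2M+1) = π^(2M) (1/2)_M / M!`, where `(1/2)_M` is the Pochhammer symbol. -/
theorem sinc_coeff_at_odd
    (g : ℂ → ℂ) (hg : AnalyticOn ℂ g (Metric.ball 0 1)) (hg0 : g 0 = 0)
    (hge : ∀ z ∈ Metric.ball (0 : ℂ) 1, Complex.exp (g z) = sinc z)
    (α : ℕ → ℂ → ℂ)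
    (hα : ∀ s : ℂ, ∀ z ∈ Metric.ball (0 : ℂ) 1,
      HasSum (fun n => α n s * z ^ (2 * n)) (Complex.exp (-s * g z)))
    (M : ℕ) :
    α M (2 * M + 1)
      = (Real.pi : ℂ) ^ (2 * M) * (∏ i ∈ Finset.range M, ((1 : ℂ) / 2 + i))
          / (Nat.factorial M) :=
  sinc_coeff_at_odd_general g hge α hα M
end

section
/- For real s with -2 < s < 1 and s ≠ 0, the mean value (1/(2π)) ∫_0^{2π} |1 - e^{iφ}|^(-s) dφ equals 2^(-s) · Γ((1-s)/2) / (√π · Γ(1 - s/2)). -/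
/-!
On the circle, `‖1 - e^{iφ}‖ = 2 |sin (φ / 2)|`. Substituting `φ = 4θ` turns the integrand into
`(4 sin θ cos θ) ^ (-s)` on `(0, π / 2)`, and the substitution `x = sin² θ` identifies
`∫₀^{π/2} sin^{2a-1} θ cos^{2b-1} θ dθ` with `B(a, b) / 2 = Γ(a) Γ(b) / (2 Γ(a + b))`.
With `a = b = (1 - s) / 2`, Legendre's duplication formula
`Γ(a) Γ(a + 1/2) = 2^{1-2a} √π Γ(2a)` brings the result to the stated form.
-/

open Real MeasureTheory Set

theorem integral_Ioo_rpow_mul_one_sub_rpow {a b : ℝ} (ha : 0 < a) (hb : 0 < b) :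
    ∫ x in Ioo (0 : ℝ) 1, x ^ (a - 1) * (1 - x) ^ (b - 1) = Gamma a * Gamma b / Gamma (a + b) := by
  have hbeta := Complex.betaIntegral_eq_Gamma_mul_div a b (by simpa) (by simpa)
  have hreal : Complex.betaIntegral a b =
      ↑(∫ x in (0 : ℝ)..1, x ^ (a - 1) * (1 - x) ^ (b - 1)) := by
    rw [Complex.betaIntegral, ← intervalIntegral.integral_ofReal]
    refine intervalIntegral.integral_congr fun x hx => ?_
    rw [uIcc_of_le zero_le_one] at hx
    push_cast [Complex.ofReal_cpow hx.1, Complex.ofReal_cpow (sub_nonneg.2 hx.2)]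
    rfl
  rw [hreal, ← Complex.ofReal_add, Complex.Gamma_ofReal, Complex.Gamma_ofReal,
    Complex.Gamma_ofReal] at hbeta
  rw [← integral_Ioc_eq_integral_Ioo, ← intervalIntegral.integral_of_le zero_le_one]
  exact_mod_cast hbeta

theorem sin_pos_and_cos_pos {θ : ℝ} (hθ : θ ∈ Ioo 0 (π / 2)) : 0 < sin θ ∧ 0 < cos θ :=
  ⟨sin_pos_of_pos_of_lt_pi hθ.1 (by linarith [hθ.2, pi_pos]),
    cos_pos_of_mem_Ioo ⟨by linarith [hθ.1, pi_pos], hθ.2⟩⟩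

theorem strictMonoOn_sin_sq : StrictMonoOn (fun θ => sin θ ^ 2) (Icc 0 (π / 2)) :=
  fun x hx y hy hxy => pow_lt_pow_left₀
    (strictMonoOn_sin ⟨by linarith [pi_pos, hx.1], hx.2⟩ ⟨by linarith [pi_pos, hy.1], hy.2⟩ hxy)
    (sin_nonneg_of_nonneg_of_le_pi hx.1 (by linarith [pi_pos, hx.2])) two_ne_zero

theorem image_sin_sq_Ioo : (fun θ => sin θ ^ 2) '' Ioo 0 (π / 2) = Ioo 0 1 := by
  rw [ContinuousOn.image_Ioo_of_strictMonoOn (by positivity) (by fun_prop) strictMonoOn_sin_sq]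
  simp

theorem mul_sq_rpow_sub_one {x : ℝ} (hx : 0 < x) (c : ℝ) :
    x * (x ^ 2) ^ (c - 1) = x ^ (2 * c - 1) := by
  rw [← rpow_natCast, ← rpow_mul hx.le, show 2 * c - 1 = 1 + (2 : ℕ) * (c - 1) by push_cast; ring,
    rpow_add hx, rpow_one]

theorem integral_Ioo_sin_rpow_mul_cos_rpow {a b : ℝ} (ha : 0 < a) (hb : 0 < b) :
    ∫ θ in Ioo 0 (π / 2), sin θ ^ (2 * a - 1) * cos θ ^ (2 * b - 1) =
      Gamma a * Gamma b / (2 * Gamma (a + b)) := by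
  have hderiv : ∀ θ ∈ Ioo 0 (π / 2),
      HasDerivWithinAt (fun θ => sin θ ^ 2) (2 * sin θ * cos θ) (Ioo 0 (π / 2)) θ :=
    fun θ _ => by simpa using ((hasDerivAt_sin θ).fun_pow 2).hasDerivWithinAt
  have hsubst := integral_image_eq_integral_abs_deriv_smul measurableSet_Ioo hderiv
    (strictMonoOn_sin_sq.injOn.mono Ioo_subset_Icc_self) fun x => x ^ (a - 1) * (1 - x) ^ (b - 1)
  rw [image_sin_sq_Ioo, integral_Ioo_rpow_mul_one_sub_rpow ha hb] at hsubst
  have hpullback : ∀ θ ∈ Ioo 0 (π / 2),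
      |2 * sin θ * cos θ| • ((sin θ ^ 2) ^ (a - 1) * (1 - sin θ ^ 2) ^ (b - 1)) =
        2 * (sin θ ^ (2 * a - 1) * cos θ ^ (2 * b - 1)) := by
    intro θ hθ
    obtain ⟨hsin, hcos⟩ := sin_pos_and_cos_pos hθ
    rw [← cos_sq', abs_of_pos (by positivity), smul_eq_mul, ← mul_sq_rpow_sub_one hsin,
      ← mul_sq_rpow_sub_one hcos]
    ring
  rw [setIntegral_congr_fun measurableSet_Ioo hpullback, integral_const_mul] at hsubst
  rw [mul_comm 2 (Gamma _), ← div_div, hsubst]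
  ring

theorem norm_one_sub_exp_I_mul_four_mul_rpow {θ : ℝ} (hθ : θ ∈ Ioo 0 (π / 2)) (p : ℝ) :
    ‖1 - Complex.exp (Complex.I * ↑(4 * θ))‖ ^ p = 4 ^ p * (sin θ ^ p * cos θ ^ p) := by
  obtain ⟨hsin, hcos⟩ := sin_pos_and_cos_pos hθ
  rw [norm_sub_rev, Complex.norm_exp_I_mul_ofReal_sub_one, show 4 * θ / 2 = 2 * θ by ring,
    sin_two_mul, norm_of_nonneg (by positivity), show 2 * (2 * sin θ * cos θ) = 4 * (sin θ * cos θ)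
    by ring, mul_rpow (by norm_num) (by positivity), mul_rpow hsin.le hcos.le]

theorem integral_norm_one_sub_exp_I_mul_rpow (p : ℝ) :
    ∫ φ in (0 : ℝ)..(2 * π), ‖1 - Complex.exp (Complex.I * φ)‖ ^ p =
      4 ^ (p + 1) * ∫ θ in Ioo 0 (π / 2), sin θ ^ p * cos θ ^ p := by
  have hscale := intervalIntegral.integral_comp_mul_left (a := 0) (b := π / 2)
    (fun φ : ℝ => ‖1 - Complex.exp (Complex.I * φ)‖ ^ p) four_ne_zero
  rw [mul_zero, show 4 * (π / 2) = 2 * π by ring, intervalIntegral.integral_of_le (by positivity),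
    integral_Ioc_eq_integral_Ioo, eq_inv_smul_iff₀ (by norm_num), smul_eq_mul,
    setIntegral_congr_fun measurableSet_Ioo fun θ hθ => norm_one_sub_exp_I_mul_four_mul_rpow hθ p,
    integral_const_mul] at hscale
  rw [← hscale, rpow_add_one (by norm_num)]
  ring

theorem circle_energy_integral_general (s : ℝ) (h2 : s < 1) :
    (1 / (2 * π)) * ∫ φ in (0 : ℝ)..(2 * π),
        ‖1 - Complex.exp (Complex.I * φ)‖ ^ (-s)
      = 2 ^ (-s) * Real.Gamma ((1 - s) / 2) / (Real.sqrt π * Real.Gamma (1 - s / 2)) := by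
  set a := (1 - s) / 2 with ha_def
  have ha : 0 < a := by linarith
  have hbeta := integral_Ioo_sin_rpow_mul_cos_rpow ha ha
  rw [show 2 * a - 1 = -s by ring, show a + a = 2 * a by ring] at hbeta
  have hdup := Gamma_mul_Gamma_add_half a
  rw [show a + 1 / 2 = 1 - s / 2 by ring, show 1 - 2 * a = s by ring] at hdup
  have hpow : (4 : ℝ) ^ (-s + 1) * 2 ^ s = 4 * 2 ^ (-s) := by
    have hinv : (2 : ℝ) ^ (-s) * 2 ^ s = 1 := by rw [← rpow_add two_pos, neg_add_cancel, rpow_zero]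
    rw [rpow_add_one (by norm_num), show (4 : ℝ) = 2 * 2 by norm_num,
      mul_rpow zero_le_two zero_le_two]
    linear_combination (4 * 2 ^ (-s)) * hinv
  have hπ : √π * √π = π := mul_self_sqrt pi_pos.le
  have hG := Gamma_pos_of_pos (by linarith : 0 < 1 - s / 2)
  have hG2a := Gamma_pos_of_pos (by linarith : 0 < 2 * a)
  rw [integral_norm_one_sub_exp_I_mul_rpow, hbeta]
  -- otherwise `field_simp` rewrites `1 - s / 2` into `(2 - s) / 2` in some occurrences only
  generalize Gamma (1 - s / 2) = G at hdup hG ⊢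
  field_simp
  linear_combination (4 ^ (-s + 1) * √π) * hdup + (Gamma (2 * a) * 4 ^ (-s + 1) * 2 ^ s) * hπ
    + (π * Gamma (2 * a)) * hpow

/-- For `-2 < s < 1`, `s ≠ 0`, the mean value of `|1 - e^{iφ}|^(-s)` over the circle equals
`2^(-s) Γ((1-s)/2)/(√π Γ(1-s/2))`. -/
theorem circle_energy_integral (s : ℝ) (h1 : -2 < s) (h2 : s < 1) (h3 : s ≠ 0) :
    (1 / (2 * π)) * ∫ φ in (0 : ℝ)..(2 * π),
        ‖1 - Complex.exp (Complex.I * φ)‖ ^ (-s)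
      = 2 ^ (-s) * Real.Gamma ((1 - s) / 2) / (Real.sqrt π * Real.Gamma (1 - s / 2)) :=
  circle_energy_integral_general s h2
end

section
/- For every integer k ≥ 1 and every x in [0,1], the Bernoulli polynomials satisfy |B_{2k}(x)| ≤ |B_{2k}| and |B_{2k+1}(x)| ≤ (2k+1)·|B_{2k}|, where B_n = B_n(0) are the Bernoulli numbers. -/
/-!
The Fourier expansion `C B_{2k}(x) = ∑ cos(2πnx) / n^{2k}` (with `C ≠ 0`) is dominated termwise by
its value `C B_{2k}(0) = ∑ 1 / n^{2k}` at `x = 0`, which gives the even bound. Since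
`B_{2k+1}' = (2k+1) B_{2k}` and `B_{2k+1}(0) = 0`, the odd bound follows from the even one by the
mean value inequality on `[0, x]`.
-/

open Real Set

theorem abs_bernoulliFun_two_mul_le {k : ℕ} (hk : k ≠ 0) {x : ℝ} (hx : x ∈ Icc (0 : ℝ) 1) :
    |bernoulliFun (2 * k) x| ≤ |(bernoulli (2 * k) : ℝ)| := by
  set C : ℝ := (-1 : ℝ) ^ (k + 1) * (2 * π) ^ (2 * k) / 2 / (2 * k).factorial
  have hC : 0 < |C| := abs_pos.2 (by positivity)
  have hcos : HasSum (fun n : ℕ => 1 / (n : ℝ) ^ (2 * k) * cos (2 * π * n * x))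
      (C * bernoulliFun (2 * k) x) := hasSum_one_div_nat_pow_mul_cos hk hx
  have hzeta : HasSum (fun n : ℕ => 1 / (n : ℝ) ^ (2 * k)) (C * bernoulli (2 * k)) := by
    convert hasSum_one_div_nat_pow_mul_cos hk (left_mem_Icc.2 zero_le_one) using 1
    · simp
    · rw [← bernoulliFun, bernoulliFun_eval_zero]
  have hle : |C * bernoulliFun (2 * k) x| ≤ C * bernoulli (2 * k) :=
    hcos.norm_le_of_bounded hzeta fun n => by
      rw [norm_mul, norm_of_nonneg (by positivity)]
      exact mul_le_of_le_one_right (by positivity) (abs_cos_le_one _)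
  refine le_of_mul_le_mul_left ?_ hC
  calc |C| * |bernoulliFun (2 * k) x| = |C * bernoulliFun (2 * k) x| := (abs_mul _ _).symm
    _ ≤ C * bernoulli (2 * k) := hle
    _ ≤ |C| * |(bernoulli (2 * k) : ℝ)| := (le_abs_self _).trans_eq (abs_mul _ _)

theorem abs_bernoulliFun_succ_sub_le {n : ℕ} {M : ℝ}
    (hM : ∀ y ∈ Icc (0 : ℝ) 1, |bernoulliFun n y| ≤ M) {x : ℝ} (hx : x ∈ Icc (0 : ℝ) 1) :
    |bernoulliFun (n + 1) x - bernoulli (n + 1)| ≤ (n + 1) * M := by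
  have hM0 : 0 ≤ M := (abs_nonneg _).trans (hM 0 (left_mem_Icc.2 zero_le_one))
  have hderiv : ∀ y ∈ Ico (0 : ℝ) 1,
      ‖((n + 1 : ℕ) : ℝ) * bernoulliFun (n + 1 - 1) y‖ ≤ (n + 1) * M := by
    intro y hy
    rw [Nat.add_sub_cancel, norm_mul, Real.norm_natCast, Real.norm_eq_abs]
    push_cast
    gcongr
    exact hM y (Ico_subset_Icc_self hy)
  have hmvt := norm_image_sub_le_of_norm_deriv_le_segment'
    (fun y _ => (hasDerivAt_bernoulliFun (n + 1) y).hasDerivWithinAt) hderiv x hx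
  rw [bernoulliFun_eval_zero, sub_zero, Real.norm_eq_abs] at hmvt
  exact hmvt.trans (mul_le_of_le_one_right (by positivity) hx.2)

/-- Bernoulli polynomial inequalities on `[0,1]`: `|B_{2k}(x)| ≤ |B_{2k}|` and
`|B_{2k+1}(x)| ≤ (2k+1)|B_{2k}|` for `k ≥ 1`. -/
theorem bernoulli_poly_bounds (k : ℕ) (hk : 1 ≤ k) (x : ℝ) (hx : x ∈ Set.Icc (0 : ℝ) 1) :
    |((Polynomial.bernoulli (2 * k)).map (algebraMap ℚ ℝ)).eval x|
        ≤ |(bernoulli (2 * k) : ℝ)| ∧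
    |((Polynomial.bernoulli (2 * k + 1)).map (algebraMap ℚ ℝ)).eval x|
        ≤ (2 * k + 1) * |(bernoulli (2 * k) : ℝ)| := by
  have heven : ∀ y ∈ Icc (0 : ℝ) 1, |bernoulliFun (2 * k) y| ≤ |(bernoulli (2 * k) : ℝ)| :=
    fun y hy => abs_bernoulliFun_two_mul_le (by omega) hy
  have hodd : bernoulli (2 * k + 1) = 0 :=
    bernoulli_eq_zero_of_odd (odd_two_mul_add_one k) (by omega)
  refine ⟨heven x hx, ?_⟩
  change |bernoulliFun (2 * k + 1) x| ≤ _
  simpa [hodd] using abs_bernoulliFun_succ_sub_le heven hx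
end

section
/- Let s be a real number with s > 0, s ∉ {2, 4, 6, …}, and define c_n(s) := (2/(2π)^s)·α_n(s)·ζ(s - 2n) (with ζ the analytically continued Riemann zeta function). Then for every fixed integer N ≥ 2, limsup_{n→∞} |c_n(s)·N^{-2n}| = ∞; that is, the asymptotic series Σ_n c_n(s) N^{1+s-2n} diverges. -/
open Filter

open Topology Set
open scoped Real

/-!
The coefficients `α n s` cannot all be `O(r ^ (2 n))` for some `r < 1`: otherwise `Σ α n s x ^ (2 n)`
would converge absolutely on `[0, 1]` to a bounded function, whereas its sum `exp (-s g x)` has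
modulus `|sinc x| ^ (-s)`, which blows up as `x → 1⁻` because `sinc 1 = 0`. So `‖α n s‖ ≥ 2 ^ (-2 n)`
infinitely often. On the other side, the functional equation writes `ζ(s - 2n)` as
`2 (2π) ^ (s - 1 - 2n) Γ(2n + 1 - s) cos(π (2n + 1 - s) / 2) ζ(2n + 1 - s)`, where the cosine is
`± sin (π s / 2) ≠ 0` and `ζ(2n + 1 - s) ≥ 1`; the factorial growth of `Γ` then beats every
geometric factor `(4 π N) ^ (2 n)`.
-/

lemma norm_sinc_ofReal {x : ℝ} (hx : x ≠ 0) : ‖sinc x‖ = |Real.sin (π * x) / (π * x)| := by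
  rw [sinc, if_neg (Complex.ofReal_ne_zero.mpr hx), ← Complex.ofReal_mul, ← Complex.ofReal_sin,
    ← Complex.ofReal_div, Complex.norm_real, Real.norm_eq_abs]

lemma tendsto_norm_sinc_nhdsLT_one : Tendsto (fun x : ℝ => ‖sinc x‖) (𝓝[<] 1) (𝓝[>] 0) := by
  have hpos : ∀ᶠ x in 𝓝[<] (1 : ℝ), x ∈ Ioo 0 1 := Ioo_mem_nhdsLT one_pos
  rw [tendsto_nhdsWithin_iff]
  constructor
  · have hcont : ContinuousAt (fun x : ℝ => |Real.sin (π * x) / (π * x)|) 1 :=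
      (ContinuousAt.div (by fun_prop) (by fun_prop) (by simp)).abs
    have h := hcont.tendsto.mono_left (nhdsWithin_le_nhds (s := Iio 1))
    rw [mul_one, Real.sin_pi, zero_div, abs_zero] at h
    refine h.congr' ?_
    filter_upwards [hpos] with x hx
    rw [norm_sinc_ofReal hx.1.ne']
  · filter_upwards [hpos] with x hx
    rw [norm_sinc_ofReal hx.1.ne']
    have hπx : 0 < π * x := mul_pos Real.pi_pos hx.1
    have hsin : 0 < Real.sin (π * x) :=
      Real.sin_pos_of_pos_of_lt_pi hπx (by nlinarith [Real.pi_pos, hx.2])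
    exact abs_pos.mpr (div_pos hsin hπx).ne'

lemma Complex.norm_exp_ofReal_mul (t : ℝ) (w : ℂ) :
    ‖Complex.exp (t * w)‖ = ‖Complex.exp w‖ ^ t := by
  rw [Complex.norm_exp, Complex.norm_exp, Complex.re_ofReal_mul, mul_comm, Real.exp_mul]

lemma tendsto_norm_exp_neg_mul_nhdsLT_one {s : ℝ} (hs : 0 < s) {g : ℂ → ℂ}
    (hge : ∀ z ∈ Metric.ball (0 : ℂ) 1, Complex.exp (g z) = sinc z) :
    Tendsto (fun x : ℝ => ‖Complex.exp (-s * g x)‖) (𝓝[<] 1) atTop := by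
  refine ((tendsto_rpow_neg_nhdsGT_zero (neg_lt_zero.mpr hs)).comp
    tendsto_norm_sinc_nhdsLT_one).congr' ?_
  filter_upwards [Ioo_mem_nhdsLT (zero_lt_one (α := ℝ))] with x hx
  have hx1 : (x : ℂ) ∈ Metric.ball 0 1 := by
    simpa [abs_of_pos hx.1] using hx.2
  rw [Function.comp_apply, ← hge x hx1, ← Complex.norm_exp_ofReal_mul, Complex.ofReal_neg]

lemma frequently_pow_le_norm_of_hasSum {a : ℕ → ℂ} {F : ℝ → ℂ} {r : ℝ} (hr₀ : 0 ≤ r)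
    (hr₁ : r < 1)
    (hF : ∀ x ∈ Ioo (0 : ℝ) 1, HasSum (fun n => a n * (x : ℂ) ^ (2 * n)) (F x))
    (hFtop : Tendsto (fun x => ‖F x‖) (𝓝[<] 1) atTop) :
    ∃ᶠ n in atTop, r ^ (2 * n) ≤ ‖a n‖ := by
  by_contra h
  rw [not_frequently] at h
  have hsum : Summable (fun n => ‖a n‖) :=
    .of_norm_bounded_eventually_nat (summable_geometric_of_lt_one (sq_nonneg r) (by nlinarith))
      (h.mono fun n hn => by rw [norm_norm, ← pow_mul]; exact (not_le.mp hn).le)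
  have hbound : ∀ x ∈ Ioo (0 : ℝ) 1, ‖F x‖ ≤ ∑' n, ‖a n‖ := fun x hx =>
    (hF x hx).norm_le_of_bounded hsum.hasSum fun n => by
      rw [norm_mul, norm_pow, Complex.norm_real, Real.norm_eq_abs, abs_of_pos hx.1]
      exact mul_le_of_le_one_right (norm_nonneg _) (pow_le_one₀ hx.1.le hx.2.le)
  have hIoo : ∀ᶠ x in 𝓝[<] (1 : ℝ), x ∈ Ioo 0 1 := Ioo_mem_nhdsLT one_pos
  obtain ⟨x, hx, hxB⟩ := (hIoo.and (hFtop.eventually_gt_atTop _)).exists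
  exact (hbound x hx).not_gt hxB

lemma one_le_norm_riemannZeta_ofReal {x : ℝ} (hx : 1 < x) : 1 ≤ ‖riemannZeta x‖ := by
  have hterm : ∀ n : ℕ, 1 / ((n : ℂ) + 1) ^ (x : ℂ) = ((1 / ((n : ℝ) + 1) ^ x : ℝ) : ℂ) := by
    intro n
    rw [Complex.ofReal_div, Complex.ofReal_one, Complex.ofReal_cpow (by positivity)]
    push_cast; rfl
  have hsum : Summable (fun n : ℕ => 1 / ((n : ℝ) + 1) ^ x) := by
    simpa using (summable_nat_add_iff 1).mpr (Real.summable_one_div_nat_rpow.mpr hx)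
  rw [zeta_eq_tsum_one_div_nat_add_one_cpow (by simpa using hx), tsum_congr hterm,
    ← Complex.ofReal_tsum, Complex.norm_real, Real.norm_eq_abs]
  calc (1 : ℝ) = 1 / ((0 : ℕ) + 1 : ℝ) ^ x := by simp
    _ ≤ ∑' n : ℕ, 1 / ((n : ℝ) + 1) ^ x := hsum.le_tsum 0 fun n _ => by positivity
    _ ≤ _ := le_abs_self _

lemma norm_riemannZeta_one_sub_ofReal_ge {w : ℝ} (hw : 1 < w) :
    2 * (2 * π) ^ (-w) * Real.Gamma w * |Real.cos (π * w / 2)| ≤ ‖riemannZeta (1 - w)‖ := by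
  have hfe := riemannZeta_one_sub (s := w)
    (fun n h => by
      have : w = -n := by exact_mod_cast h
      linarith [(Nat.cast_nonneg n : (0 : ℝ) ≤ n)])
    (fun h => hw.ne' (by exact_mod_cast h))
  have hcos : Complex.cos (π * w / 2) = (Real.cos (π * w / 2) : ℂ) := by push_cast; rfl
  rw [hfe, norm_mul, norm_mul, norm_mul, norm_mul, hcos, Complex.Gamma_ofReal,
    show (2 * π : ℂ) = ((2 * π : ℝ) : ℂ) by push_cast; rfl,
    Complex.norm_cpow_eq_rpow_re_of_pos (by positivity), Complex.norm_real, Complex.norm_real,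
    Real.norm_eq_abs, Real.norm_eq_abs, abs_of_pos (Real.Gamma_pos_of_pos (by linarith))]
  simp only [Complex.neg_re, Complex.ofReal_re, Complex.norm_ofNat]
  have hΓ := Real.Gamma_pos_of_pos (by linarith : 0 < w)
  exact le_mul_of_one_le_right (by positivity) (one_le_norm_riemannZeta_ofReal hw)

lemma norm_riemannZeta_sub_two_mul_ge {s : ℝ} {n : ℕ} (hn : s + 1 < 2 * n) :
    2 * (2 * π) ^ (s - 1) * |Real.sin (π * s / 2)| * Real.Gamma (2 * n + (1 - s)) /
      (2 * π) ^ (2 * n) ≤ ‖riemannZeta (s - 2 * n)‖ := by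
  have h := norm_riemannZeta_one_sub_ofReal_ge (w := 2 * n + (1 - s)) (by linarith)
  have hcos : |Real.cos (π * (2 * n + (1 - s)) / 2)| = |Real.sin (π * s / 2)| := by
    rw [show π * (2 * n + (1 - s)) / 2 = n * π - (π * s / 2 - π / 2) by ring,
      Real.cos_nat_mul_pi_sub, Real.cos_sub_pi_div_two, abs_mul, abs_pow, abs_neg, abs_one,
      one_pow, one_mul]
  have hpow : (2 * π) ^ (-(2 * n + (1 - s))) = (2 * π) ^ (s - 1) / (2 * π) ^ (2 * n) := by
    rw [show -(2 * n + (1 - s)) = s - 1 - (2 * n : ℕ) by push_cast; ring,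
      Real.rpow_sub (by positivity), Real.rpow_natCast]
  rw [hcos, hpow, show (1 : ℂ) - ((2 * n + (1 - s) : ℝ) : ℂ) = s - 2 * n by push_cast; ring] at h
  convert h using 1
  ring

lemma eventually_mul_pow_lt_Gamma (b a c : ℝ) :
    ∀ᶠ m : ℕ in atTop, b * a ^ m < Real.Gamma (m + c) := by
  set d := ⌈-c⌉₊ + 1
  filter_upwards [FloorSemiring.eventually_mul_pow_lt_factorial_sub b a d,
    eventually_ge_atTop (d + 1)] with m hm hmd
  have hc : -c ≤ ⌈-c⌉₊ := Nat.le_ceil _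
  have hcast : ((m - d : ℕ) : ℝ) = m - ⌈-c⌉₊ - 1 := by
    rw [Nat.cast_sub (by omega), Nat.cast_add, Nat.cast_one]; ring
  calc b * a ^ m < (m - d).factorial := hm
    _ = Real.Gamma ((m - d : ℕ) + 1) := (Real.Gamma_nat_eq_factorial _).symm
    _ ≤ Real.Gamma (m + c) := by
      have hm2 : (2 : ℝ) ≤ (m - d : ℕ) + 1 := by
        have : 1 ≤ m - d := by omega
        exact_mod_cast (by omega : 2 ≤ m - d + 1)
      exact Real.Gamma_strictMonoOn_Ici.monotoneOn hm2 (by rw [mem_Ici]; linarith)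
        (by rw [hcast]; linarith)

lemma Real.sin_pi_mul_div_two_ne_zero {s : ℝ} (hs : 0 < s) (hs2 : ∀ M : ℕ, s ≠ 2 * (M + 1)) :
    Real.sin (π * s / 2) ≠ 0 := by
  rw [Ne, Real.sin_eq_zero_iff]
  rintro ⟨m, hm⟩
  have hsm : s = 2 * m := by
    have := Real.pi_pos
    field_simp at hm; linarith
  obtain ⟨M, rfl⟩ : ∃ M : ℕ, m = M + 1 :=
    have hm₀ : 0 < m := by exact_mod_cast (by linarith : (0 : ℝ) < m)
    ⟨(m - 1).toNat, by omega⟩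
  exact hs2 M (by rw [hsm]; push_cast; ring)

theorem coeff_divergence_general (s : ℝ) (hs : 0 < s) (hs2 : ∀ M : ℕ, s ≠ 2 * (M + 1))
    (g : ℂ → ℂ)
    (hge : ∀ z ∈ Metric.ball (0 : ℂ) 1, Complex.exp (g z) = sinc z)
    (α : ℕ → ℂ → ℂ)
    (hα : ∀ t : ℂ, ∀ z ∈ Metric.ball (0 : ℂ) 1,
      HasSum (fun n => α n t * z ^ (2 * n)) (Complex.exp (-t * g z)))
    (N : ℕ) (hN : 2 ≤ N) :
    ∀ C : ℝ, ∃ᶠ n in atTop,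
      C < ‖(2 / (2 * Real.pi : ℂ) ^ (s : ℂ)) * α n (s : ℂ)
            * riemannZeta ((s : ℂ) - 2 * n)‖ * (N : ℝ) ^ (-(2 * n : ℤ)) := by
  intro C
  have hα_large : ∃ᶠ n in atTop, (1 / 2 : ℝ) ^ (2 * n) ≤ ‖α n s‖ :=
    frequently_pow_le_norm_of_hasSum (by norm_num) (by norm_num)
      (fun x hx => hα s x (by simpa [abs_of_pos hx.1] using hx.2))
      (tendsto_norm_exp_neg_mul_nhdsLT_one hs hge)
  set P := ‖2 / (2 * Real.pi : ℂ) ^ (s : ℂ)‖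
  set B := P * (2 * (2 * π) ^ (s - 1) * |Real.sin (π * s / 2)|)
  have hB : 0 < B := by
    have hP : 0 < P := norm_pos_iff.mpr (div_ne_zero two_ne_zero (by simp [Real.pi_ne_zero]))
    have := Real.sin_pi_mul_div_two_ne_zero hs hs2
    positivity
  set a : ℝ := 2 * (2 * π) * N
  have hN₀ : (0 : ℝ) < N := by positivity
  have ha : 0 < a := by positivity
  have hΓ : ∀ᶠ n : ℕ in atTop, C / B * a ^ (2 * n) < Real.Gamma (2 * n + (1 - s)) := by
    have h2n : Tendsto (fun n : ℕ => 2 * n) atTop atTop :=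
      tendsto_atTop_mono (fun n => Nat.le_mul_of_pos_left n two_pos) tendsto_id
    simpa using h2n.eventually (eventually_mul_pow_lt_Gamma (C / B) a (1 - s))
  obtain ⟨n₀, hn₀⟩ := exists_nat_gt (s + 1)
  refine (hα_large.and_eventually (hΓ.and (eventually_ge_atTop n₀))).mono ?_
  rintro n ⟨hαn, hΓn, hn⟩
  have hsn : s + 1 < 2 * n := by
    have : (n₀ : ℝ) ≤ n := by exact_mod_cast hn
    linarith
  have hΓpos : 0 < Real.Gamma (2 * n + (1 - s)) := Real.Gamma_pos_of_pos (by linarith)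
  calc C = B * (C / B * a ^ (2 * n)) * (a ^ (2 * n))⁻¹ := by field_simp
    _ < B * Real.Gamma (2 * n + (1 - s)) * (a ^ (2 * n))⁻¹ := by gcongr
    _ = P * (1 / 2) ^ (2 * n) * (2 * (2 * π) ^ (s - 1) * |Real.sin (π * s / 2)| *
          Real.Gamma (2 * n + (1 - s)) / (2 * π) ^ (2 * n)) * ((N : ℝ) ^ (2 * n))⁻¹ := by
      simp only [a, B, mul_pow, one_div_pow]; field_simp
    _ ≤ P * ‖α n s‖ * ‖riemannZeta (s - 2 * n)‖ * ((N : ℝ) ^ (2 * n))⁻¹ := by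
      gcongr; exact norm_riemannZeta_sub_two_mul_ge hsn
    _ = _ := by
      rw [norm_mul, norm_mul, zpow_neg, show (2 * n : ℤ) = ((2 * n : ℕ) : ℤ) by push_cast; rfl,
        zpow_natCast]

/-- For real `s > 0` with `s ∉ {2, 4, 6, …}` and `c_n(s) = (2/(2π)^s) α_n(s) ζ(s - 2n)`,
for every fixed `N ≥ 2` one has `limsup_{n → ∞} |c_n(s) N^{-2n}| = ∞`. -/
theorem coeff_divergence (s : ℝ) (hs : 0 < s) (hs2 : ∀ M : ℕ, s ≠ 2 * (M + 1))
    (g : ℂ → ℂ) (hg : AnalyticOn ℂ g (Metric.ball 0 1)) (hg0 : g 0 = 0)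
    (hge : ∀ z ∈ Metric.ball (0 : ℂ) 1, Complex.exp (g z) = sinc z)
    (α : ℕ → ℂ → ℂ)
    (hα : ∀ t : ℂ, ∀ z ∈ Metric.ball (0 : ℂ) 1,
      HasSum (fun n => α n t * z ^ (2 * n)) (Complex.exp (-t * g z)))
    (N : ℕ) (hN : 2 ≤ N) :
    ∀ C : ℝ, ∃ᶠ n in atTop,
      C < ‖(2 / (2 * Real.pi : ℂ) ^ (s : ℂ)) * α n (s : ℂ)
            * riemannZeta ((s : ℂ) - 2 * n)‖ * (N : ℝ) ^ (-(2 * n : ℤ)) :=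
  coeff_divergence_general s hs hs2 g hge α hα N hN
end
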